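/- arXiv:2602.09127 — 3 statements merged into one kernel-verified Lean document; each statement's English description precedes it below -/
import Mathlib

section
/- Let Z be a random variable and T ∈ {0,1} with η(Z) := P(T=1 | Z) satisfying the log-odds model ln(η(Z)/(1−η(Z))) = ln(p/(1−p)) + ε·G almost surely, where E[G]=0, E[G²]=1, E[|G|³] < ∞, and p ∈ (0,1). Then the mutual information J = I(T;Z) in bits satisfies J = p(1−p)·ε² / (2 ln 2) + o(ε²) as ε → 0. -/
/-!
Write `p = σ a` with `σ` the sigmoid. With the log-partition function `A y = log (1 + exp y)`,
`log 2 · D(Bern σ(a + x) ∥ Bern σ a) = x σ(a + x) - A(a + x) + A a`, a Bregman divergence of `A`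
whose derivative in `x` is `x σ'(a + x)`. As `σ' = σ (1 - σ)` is 1-Lipschitz, the mean value
inequality gives `|log 2 · D - σ'(a) x² / 2| ≤ |x|³` for every `x`. Putting `x = ε G` and integrating,
`E[G²] = 1` and `E|G|³ < ∞` give `J ε - p (1 - p) ε² / (2 log 2) = O(ε³)`.
-/

open MeasureTheory Asymptotics

/-- Binary Kullback–Leibler divergence in bits between `Bern(q)` and `Bern(p)`. -/
noncomputable def klBern (q p : ℝ) : ℝ :=
  q * Real.logb 2 (q / p) + (1 - q) * Real.logb 2 ((1 - q) / (1 - p))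

noncomputable def logistic (x : ℝ) : ℝ := 1 / (1 + Real.exp (-x))

open Real

lemma logistic_eq_sigmoid : logistic = sigmoid := by
  funext x
  rw [logistic, one_div, sigmoid_def]

namespace Real

lemma sigmoid_eq_exp_div (y : ℝ) : sigmoid y = exp y / (1 + exp y) := by
  rw [sigmoid_def, exp_neg]
  field_simp
  ring

lemma log_sigmoid (y : ℝ) : log (sigmoid y) = y - log (1 + exp y) := by
  rw [sigmoid_eq_exp_div, log_div (by positivity) (by positivity), log_exp]

lemma log_one_sub_sigmoid (y : ℝ) : log (1 - sigmoid y) = -log (1 + exp y) := by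
  rw [← sigmoid_neg, sigmoid_def, neg_neg, log_inv]

lemma sigmoid_log_div_one_sub {p : ℝ} (hp0 : 0 < p) (hp1 : p < 1) :
    sigmoid (log (p / (1 - p))) = p := by
  have : 0 < 1 - p := by linarith
  rw [sigmoid_eq_exp_div, exp_log (by positivity)]
  field_simp
  ring

lemma hasDerivAt_log_one_add_exp (y : ℝ) :
    HasDerivAt (fun y => log (1 + exp y)) (sigmoid y) y := by
  rw [sigmoid_eq_exp_div]
  exact ((hasDerivAt_exp y).const_add 1).log (by positivity)

lemma abs_sigmoid_sub_le (u v : ℝ) : |sigmoid u - sigmoid v| ≤ |u - v| := by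
  have hderiv : ∀ t, ‖sigmoid t * (1 - sigmoid t)‖ ≤ 1 := fun t => by
    rw [norm_eq_abs, abs_of_nonneg (mul_nonneg (sigmoid_nonneg t) (sub_nonneg.2 (sigmoid_le_one t)))]
    nlinarith [sigmoid_pos t, sigmoid_lt_one t]
  simpa using convex_univ.norm_image_sub_le_of_norm_hasDerivWithin_le
    (fun t _ => (hasDerivAt_sigmoid t).hasDerivWithinAt) (fun t _ => hderiv t)
    (Set.mem_univ v) (Set.mem_univ u)

lemma abs_sigmoid_mul_one_sub_sub_le (u v : ℝ) :
    |sigmoid u * (1 - sigmoid u) - sigmoid v * (1 - sigmoid v)| ≤ |u - v| := by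
  have hfactor : |1 - sigmoid u - sigmoid v| ≤ 1 := by
    rw [abs_le]
    constructor <;> linarith [sigmoid_pos u, sigmoid_pos v, sigmoid_lt_one u, sigmoid_lt_one v]
  calc |sigmoid u * (1 - sigmoid u) - sigmoid v * (1 - sigmoid v)|
      = |sigmoid u - sigmoid v| * |1 - sigmoid u - sigmoid v| := by rw [← abs_mul]; ring_nf
    _ ≤ |u - v| * 1 := mul_le_mul (abs_sigmoid_sub_le u v) hfactor (abs_nonneg _) (abs_nonneg _)
    _ = |u - v| := mul_one _

end Real

lemma abs_sub_sub_mul_sq_le_of_hasDerivAt {f h : ℝ → ℝ} {K : ℝ}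
    (hf : ∀ t, HasDerivAt f (t * h t) t) (hh : ∀ t, |h t - h 0| ≤ K * |t|) (x : ℝ) :
    |f x - f 0 - h 0 / 2 * x ^ 2| ≤ K * |x| ^ 3 := by
  have hK : 0 ≤ K := by simpa using (abs_nonneg _).trans (hh 1)
  have hF : ∀ t, HasDerivAt (fun t => f t - h 0 / 2 * t ^ 2) (t * (h t - h 0)) t := fun t => by
    refine ((hf t).sub ((hasDerivAt_pow 2 t).const_mul (h 0 / 2))).congr_deriv ?_
    norm_num
    ring
  have hbound : ∀ t ∈ Set.uIcc 0 x, ‖t * (h t - h 0)‖ ≤ K * x ^ 2 := fun t ht => by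
    have htx : |t| ≤ |x| := by simpa using Set.abs_sub_left_of_mem_uIcc ht
    rw [norm_eq_abs, abs_mul, ← sq_abs x]
    calc |t| * |h t - h 0| ≤ |x| * (K * |x|) := by
          gcongr
          exact (hh t).trans (by gcongr)
      _ = K * |x| ^ 2 := by ring
  have := (convex_uIcc 0 x).norm_image_sub_le_of_norm_hasDerivWithin_le
    (fun t _ => (hF t).hasDerivWithinAt) hbound Set.left_mem_uIcc Set.right_mem_uIcc
  simp only [norm_eq_abs, sub_zero] at this
  calc |f x - f 0 - h 0 / 2 * x ^ 2| = |f x - h 0 / 2 * x ^ 2 - (f 0 - h 0 / 2 * 0 ^ 2)| := by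
        congr 1; ring
    _ ≤ K * x ^ 2 * |x| := this
    _ = K * |x| ^ 3 := by rw [← sq_abs]; ring

lemma klBern_sigmoid_add (a x : ℝ) :
    klBern (sigmoid (a + x)) (sigmoid a)
      = (x * sigmoid (a + x) - log (1 + exp (a + x)) + log (1 + exp a)) / log 2 := by
  have hq0 := sigmoid_pos (a + x)
  have hq1 : 0 < 1 - sigmoid (a + x) := sub_pos.2 (sigmoid_lt_one _)
  have hp0 := sigmoid_pos a
  have hp1 : 0 < 1 - sigmoid a := sub_pos.2 (sigmoid_lt_one _)
  rw [klBern, logb, logb, log_div hq0.ne' hp0.ne', log_div hq1.ne' hp1.ne', log_sigmoid,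
    log_sigmoid, log_one_sub_sigmoid, log_one_sub_sigmoid]
  ring

lemma abs_klBern_sigmoid_add_sub_le (a x : ℝ) :
    |klBern (sigmoid (a + x)) (sigmoid a) - sigmoid a * (1 - sigmoid a) / (2 * log 2) * x ^ 2|
      ≤ 1 / log 2 * |x| ^ 3 := by
  have hlog2 : 0 < log 2 := log_pos one_lt_two
  have hf : ∀ t, HasDerivAt (fun t => t * sigmoid (a + t) - log (1 + exp (a + t)))
      (t * (sigmoid (a + t) * (1 - sigmoid (a + t)))) t := fun t => by
    refine (((hasDerivAt_id t).mul ((hasDerivAt_sigmoid (a + t)).comp_const_add a t)).sub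
      ((hasDerivAt_log_one_add_exp (a + t)).comp_const_add a t)).congr_deriv ?_
    simp only [id]
    ring
  have htaylor := abs_sub_sub_mul_sq_le_of_hasDerivAt (K := 1) hf
    (fun t => by simpa using abs_sigmoid_mul_one_sub_sub_le (a + t) a) x
  simp only [zero_mul, add_zero, zero_sub, sub_neg_eq_add, one_mul] at htaylor
  have hrewrite : (x * sigmoid (a + x) - log (1 + exp (a + x)) + log (1 + exp a)) / log 2
      - sigmoid a * (1 - sigmoid a) / (2 * log 2) * x ^ 2
      = (x * sigmoid (a + x) - log (1 + exp (a + x)) + log (1 + exp a)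
          - sigmoid a * (1 - sigmoid a) / 2 * x ^ 2) / log 2 := by
    field_simp
  rw [klBern_sigmoid_add, hrewrite, abs_div, abs_of_pos hlog2, one_div_mul_eq_div]
  exact div_le_div_of_nonneg_right htaylor hlog2.le

lemma abs_integral_comp_mul_sub_le {Ω : Type*} [MeasurableSpace Ω] {μ : Measure Ω}
    {φ : ℝ → ℝ} {c C : ℝ} (hφ : Measurable φ) (hφc : ∀ x, |φ x - c * x ^ 2| ≤ C * |x| ^ 3)
    {G : Ω → ℝ} (hG : Measurable G) (hG2 : Integrable (fun ω => G ω ^ 2) μ)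
    (hG3 : Integrable (fun ω => |G ω| ^ 3) μ) (ε : ℝ) :
    |∫ ω, φ (ε * G ω) ∂μ - c * (∫ ω, G ω ^ 2 ∂μ) * ε ^ 2|
      ≤ C * (∫ ω, |G ω| ^ 3 ∂μ) * |ε| ^ 3 := by
  have hpt : ∀ ω, |φ (ε * G ω) - c * ε ^ 2 * G ω ^ 2| ≤ C * |ε| ^ 3 * |G ω| ^ 3 := fun ω => by
    simpa only [mul_pow, abs_mul, mul_assoc] using hφc (ε * G ω)
  have hrem : Integrable (fun ω => φ (ε * G ω) - c * ε ^ 2 * G ω ^ 2) μ :=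
    (hG3.const_mul (C * |ε| ^ 3)).mono'
      ((hφ.comp (hG.const_mul ε)).sub (by fun_prop)).aestronglyMeasurable
      (ae_of_all _ hpt)
  have hφG : Integrable (fun ω => φ (ε * G ω)) μ :=
    (hrem.add (hG2.const_mul (c * ε ^ 2))).congr (ae_of_all _ fun ω => sub_add_cancel _ _)
  calc |∫ ω, φ (ε * G ω) ∂μ - c * (∫ ω, G ω ^ 2 ∂μ) * ε ^ 2|
      = |∫ ω, (φ (ε * G ω) - c * ε ^ 2 * G ω ^ 2) ∂μ| := by
        rw [integral_sub hφG (hG2.const_mul _), integral_const_mul]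
        ring_nf
    _ ≤ ∫ ω, |φ (ε * G ω) - c * ε ^ 2 * G ω ^ 2| ∂μ := abs_integral_le_integral_abs
    _ ≤ ∫ ω, C * |ε| ^ 3 * |G ω| ^ 3 ∂μ := integral_mono hrem.abs (hG3.const_mul _) hpt
    _ = C * (∫ ω, |G ω| ^ 3 ∂μ) * |ε| ^ 3 := by rw [integral_const_mul]; ring

theorem weak_screening_information_general
    {Ω : Type*} [MeasurableSpace Ω] (μ : Measure Ω)
    (p : ℝ) (hp0 : 0 < p) (hp1 : p < 1)
    (G : Ω → ℝ) (hmeas : Measurable G)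
    (hvar : ∫ ω, (G ω) ^ 2 ∂μ = 1)
    (hthird : Integrable (fun ω => |G ω| ^ 3) μ)
    (J : ℝ → ℝ)
    (hJ : J = fun ε => ∫ ω, klBern (logistic (Real.log (p / (1 - p)) + ε * G ω)) p ∂μ) :
    (fun ε : ℝ => J ε - p * (1 - p) * ε ^ 2 / (2 * Real.log 2))
      =o[nhds 0] (fun ε : ℝ => ε ^ 2) := by
  set a := log (p / (1 - p))
  have hσa : sigmoid a = p := sigmoid_log_div_one_sub hp0 hp1
  have hφ : Measurable fun x => klBern (sigmoid (a + x)) p := by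
    have := continuous_sigmoid.measurable
    unfold klBern logb
    fun_prop
  have hφc (x : ℝ) : |klBern (sigmoid (a + x)) p - p * (1 - p) / (2 * log 2) * x ^ 2|
      ≤ 1 / log 2 * |x| ^ 3 := hσa ▸ abs_klBern_sigmoid_add_sub_le a x
  -- a non-integrable function has Bochner integral `0`, so `hvar` forces integrability
  have hG2 : Integrable (fun ω => G ω ^ 2) μ := .of_integral_ne_zero (by simp [hvar])
  refine IsBigO.trans_isLittleO (g := fun ε : ℝ => ε ^ 3) ?_ (isLittleO_pow_pow (by norm_num))
  refine .of_bound (1 / log 2 * ∫ ω, |G ω| ^ 3 ∂μ) (.of_forall fun ε => ?_)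
  rw [norm_eq_abs, norm_pow, norm_eq_abs]
  convert abs_integral_comp_mul_sub_le hφ hφc hmeas hG2 hthird ε using 2
  rw [hJ, logistic_eq_sigmoid, hvar]
  ring

/-- under the weak-screening log-odds model
`ln(η/(1−η)) = ln(p/(1−p)) + ε·G` (i.e. `η = σ(ln(p/(1−p)) + ε·G)`), with
`E[G]=0`, `E[G²]=1`, `E[|G|³]<∞`, the screening information in bits,
`J(ε) = E[D(Bern(η) ∥ Bern(p))] = I(T;Z)`, satisfies
`J(ε) = p(1−p)·ε²/(2 ln 2) + o(ε²)` as `ε → 0`. -/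
theorem weak_screening_information
    {Ω : Type*} [MeasurableSpace Ω] (μ : Measure Ω) [IsProbabilityMeasure μ]
    (p : ℝ) (hp0 : 0 < p) (hp1 : p < 1)
    (G : Ω → ℝ) (hmeas : Measurable G)
    (hmean : ∫ ω, G ω ∂μ = 0)
    (hvar : ∫ ω, (G ω) ^ 2 ∂μ = 1)
    (hthird : Integrable (fun ω => |G ω| ^ 3) μ)
    (J : ℝ → ℝ)
    (hJ : J = fun ε => ∫ ω, klBern (logistic (Real.log (p / (1 - p)) + ε * G ω)) p ∂μ) :
    (fun ε : ℝ => J ε - p * (1 - p) * ε ^ 2 / (2 * Real.log 2))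
      =o[nhds 0] (fun ε : ℝ => ε ^ 2) :=
  weak_screening_information_general μ p hp0 hp1 G hmeas hvar hthird J hJ
end

section
/- In the benchmark haystack model, for any verification policy selecting a set 𝓑 ⊆ {1,…,K} with |𝓑| = B as a function of Z₁,…,Z_K (and independent randomness), E[Σ_{i∈𝓑} Tᵢ] ≤ E[Σ_{ℓ=1}^B η₍ℓ₎], where ηᵢ = P(Tᵢ = 1 | Zᵢ) and η₍₁₎ ≥ … ≥ η₍K₎ are the order statistics; equality holds for the top-B policy. -/
open MeasureTheory ProbabilityTheory

/-!
Since the policy sees only `Z^K`, the event `{i ∈ 𝓑}` is `σ(Z^K)`-measurable, so the tower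
property replaces each `Tᵢ` by `η(Zᵢ)` inside `E[Σ_{i∈𝓑} Tᵢ]`. Pointwise, any `B`-subset sum of
the `η(Zᵢ)` is at most the sum of the `B` largest, which the top-`B` policy attains; that policy
is `σ(Z^K)`-measurable because it depends only on the finitely many comparisons
`η(Zⱼ) ≤ η(Zᵢ)`.
-/

/-- The sum of the `B` largest entries of a list of reals. -/
noncomputable def topSum (B : ℕ) (l : List ℝ) : ℝ :=
  ((l.insertionSort (· ≥ ·)).take B).sum

theorem Multiset.sum_le_sum_take_of_le {α : Type*} [AddCommMonoid α] [LinearOrder α]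
    [IsOrderedAddMonoid α] {l : List α} (hl : l.Pairwise (· ≥ ·)) {m : Multiset α}
    (hm : m ≤ ↑l) : m.sum ≤ (l.take (Multiset.card m)).sum := by
  classical
  induction l generalizing m with
  | nil => simp [Multiset.le_zero.mp (by simpa using hm)]
  | cons a t ih =>
    obtain ⟨hat, ht⟩ := List.pairwise_cons.mp hl
    rcases Multiset.empty_or_exists_mem m with rfl | ⟨y, hy⟩
    · simp
    obtain ⟨x, hx, hxa, hxt⟩ : ∃ x ∈ m, x ≤ a ∧ m.erase x ≤ ↑t := by
      by_cases ha : a ∈ m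
      · exact ⟨a, ha, le_rfl, by simpa using Multiset.erase_le_erase a hm⟩
      · have hmt : m ≤ ↑t := (Multiset.le_cons_of_notMem ha).mp (by simpa using hm)
        exact ⟨y, hy, hat y (Multiset.mem_of_le hmt hy), (Multiset.erase_le _ _).trans hmt⟩
    rw [← Multiset.cons_erase hx, Multiset.sum_cons, Multiset.card_cons, List.take_succ_cons,
      List.sum_cons]
    exact add_le_add hxa (ih ht hxt)

theorem sum_le_topSum {K : ℕ} (v : Fin K → ℝ) (s : Finset (Fin K)) :
    ∑ i ∈ s, v i ≤ topSum s.card (List.ofFn v) := by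
  have hs : s.val.map v ≤ ↑((List.ofFn v).insertionSort (· ≥ ·)) := by
    rw [Multiset.coe_eq_coe.mpr (List.perm_insertionSort _ _), ← Fin.univ_val_map]
    exact Multiset.map_le_map (Finset.val_le_iff.mpr s.subset_univ)
  calc ∑ i ∈ s, v i = (s.val.map v).sum := rfl
    _ ≤ _ := Multiset.sum_le_sum_take_of_le (List.pairwise_insertionSort _ _) hs
    _ = topSum s.card (List.ofFn v) := by simp [topSum]

section TopIndices

variable {K : ℕ}

def topIndicesBy (B : ℕ) (le : Fin K → Fin K → Bool) : Finset (Fin K) :=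
  (((List.finRange K).mergeSort le).take B).toFinset

-- `rankComparisons v i j` says that `i` may be ranked ahead of `j`; `mergeSort` is stable, so
-- ties are broken by index.
noncomputable def rankComparisons (v : Fin K → ℝ) : Fin K → Fin K → Bool :=
  fun i j => decide (v j ≤ v i)

noncomputable def topIndices (B : ℕ) (v : Fin K → ℝ) : Finset (Fin K) :=
  topIndicesBy B (rankComparisons v)

theorem nodup_take_mergeSort_finRange (B : ℕ) (le : Fin K → Fin K → Bool) :
    (((List.finRange K).mergeSort le).take B).Nodup :=
  ((List.mergeSort_perm _ _).nodup_iff.mpr (List.nodup_finRange K)).sublist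
    (List.take_sublist _ _)

theorem card_topIndicesBy {B : ℕ} (hB : B ≤ K) (le : Fin K → Fin K → Bool) :
    (topIndicesBy B le).card = B := by
  classical
  rw [topIndicesBy, List.card_toFinset, (nodup_take_mergeSort_finRange B le).dedup,
    List.length_take, (List.mergeSort_perm _ _).length_eq, List.length_finRange]
  exact min_eq_left hB

theorem map_mergeSort_rankComparisons (v : Fin K → ℝ) :
    ((List.finRange K).mergeSort (rankComparisons v)).map v =
      (List.ofFn v).insertionSort (· ≥ ·) := by
  have hsorted := List.pairwise_mergeSort (le := rankComparisons v)
    (fun a b c hab hbc => by simp_all [rankComparisons]; linarith)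
    (fun a b => by simpa [rankComparisons] using le_total (v b) (v a)) (List.finRange K)
  refine List.Perm.eq_of_pairwise' ?_ (List.pairwise_insertionSort _ _) ?_
  · exact hsorted.map v fun a b h => by simpa [rankComparisons] using h
  · rw [List.ofFn_eq_map]
    exact ((List.mergeSort_perm _ _).map v).trans (List.perm_insertionSort _ _).symm

theorem sum_topIndices (B : ℕ) (v : Fin K → ℝ) :
    ∑ i ∈ topIndices B v, v i = topSum B (List.ofFn v) := by
  classical
  rw [topIndices, topIndicesBy, List.sum_toFinset _ (nodup_take_mergeSort_finRange B _),
    List.map_take, map_mergeSort_rankComparisons, topSum]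

theorem measurable_rankComparisons : Measurable (rankComparisons (K := K)) := by
  refine measurable_pi_lambda _ fun i => measurable_pi_lambda _ fun j => ?_
  refine measurable_to_bool ?_
  have : MeasurableSet {w : Fin K → ℝ | w j ≤ w i} :=
    measurableSet_le (measurable_pi_apply j) (measurable_pi_apply i)
  convert this using 1
  ext w
  simp [rankComparisons]

end TopIndices

theorem measurableSet_preimage_of_countable {α β : Type*} {m : MeasurableSpace α} [Countable β]
    {f : α → β} (hf : ∀ b, MeasurableSet[m] (f ⁻¹' {b})) (S : Set β) :
    MeasurableSet[m] (f ⁻¹' S) := by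
  rw [← Set.biUnion_preimage_singleton]
  exact .biUnion S.to_countable fun b _ => hf b

section SelectionPolicy

variable {Ω ι : Type*} [Fintype ι] {m m0 : MeasurableSpace Ω} {μ : Measure[m0] Ω}
  {𝓒 : Ω → Finset ι}

theorem sum_mem_eq_sum_indicator (f : ι → Ω → ℝ) (ω : Ω) :
    ∑ i ∈ 𝓒 ω, f i ω = ∑ i, {ω | i ∈ 𝓒 ω}.indicator (f i) ω := by
  classical
  simp only [Set.indicator_apply, Set.mem_ofPred_eq, Fintype.sum_ite_mem]

theorem integrable_sum_mem {f : ι → Ω → ℝ} (hf : ∀ i, Integrable (f i) μ)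
    (h𝓒 : ∀ i, MeasurableSet[m0] {ω | i ∈ 𝓒 ω}) :
    Integrable (fun ω => ∑ i ∈ 𝓒 ω, f i ω) μ := by
  simp_rw [sum_mem_eq_sum_indicator]
  exact integrable_finsetSum _ fun i _ => (hf i).indicator (h𝓒 i)

theorem integral_sum_mem_eq_of_condExp_ae_eq (hm : m ≤ m0) [SigmaFinite (μ.trim hm)]
    {X Y : ι → Ω → ℝ} (hX : ∀ i, Integrable (X i) μ) (hXY : ∀ i, μ[X i|m] =ᵐ[μ] Y i)
    (h𝓒 : ∀ i, MeasurableSet[m] {ω | i ∈ 𝓒 ω}) :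
    ∫ ω, ∑ i ∈ 𝓒 ω, X i ω ∂μ = ∫ ω, ∑ i ∈ 𝓒 ω, Y i ω ∂μ := by
  have hY : ∀ i, Integrable (Y i) μ := fun i => integrable_condExp.congr (hXY i)
  simp_rw [sum_mem_eq_sum_indicator]
  rw [integral_finsetSum _ fun i _ => (hX i).indicator (hm _ (h𝓒 i)),
    integral_finsetSum _ fun i _ => (hY i).indicator (hm _ (h𝓒 i))]
  refine Finset.sum_congr rfl fun i _ => ?_
  rw [integral_indicator (hm _ (h𝓒 i)), integral_indicator (hm _ (h𝓒 i)),
    ← setIntegral_condExp hm (hX i) (h𝓒 i)]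
  exact integral_congr_ae (ae_restrict_of_ae (hXY i))

end SelectionPolicy

theorem optimal_hit_rate_general
    {Ω : Type*} [m0 : MeasurableSpace Ω] (μ : Measure Ω) [IsProbabilityMeasure μ]
    (K B : ℕ) (hB : B ≤ K)
    (T Z : Fin K → Ω → ℝ)
    (hTmeas : ∀ i, Measurable (T i))
    (hT01 : ∀ i ω, T i ω = 0 ∨ T i ω = 1)
    (η : ℝ → ℝ) (hη : Measurable η)
    -- the σ-algebra generated by the screening statistics Z₁,…,Z_K
    (mZ : MeasurableSpace Ω)
    (hmZ : mZ = MeasurableSpace.comap (fun ω (i : Fin K) => Z i ω) inferInstance)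
    (hle : mZ ≤ m0)
    -- conditional independence of the types given Z^K with E[Tᵢ | Z^K] = η(Zᵢ)
    (hcond : ∀ i, μ[T i | mZ] =ᵐ[μ] fun ω => η (Z i ω))
    -- the verification policy: a size-B subset chosen measurably from Z^K
    (𝓑 : Ω → Finset (Fin K))
    (hcard : ∀ ω, (𝓑 ω).card = B)
    (hpol : ∀ s : Finset (Fin K), MeasurableSet[mZ] (𝓑 ⁻¹' {s})) :
    (∫ ω, ∑ i ∈ 𝓑 ω, T i ω ∂μ) ≤
      (∫ ω, topSum B (List.ofFn fun i : Fin K => η (Z i ω)) ∂μ) ∧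
    ∃ 𝓑' : Ω → Finset (Fin K),
      (∀ ω, (𝓑' ω).card = B) ∧
      (∀ s : Finset (Fin K), MeasurableSet[mZ] (𝓑' ⁻¹' {s})) ∧
      (∫ ω, ∑ i ∈ 𝓑' ω, T i ω ∂μ) =
        (∫ ω, topSum B (List.ofFn fun i : Fin K => η (Z i ω)) ∂μ) := by
  have hTint : ∀ i, Integrable (T i) μ := fun i =>
    Integrable.mono' (integrable_const 1) (hTmeas i).aestronglyMeasurable
      (.of_forall fun ω => by rcases hT01 i ω with h | h <;> simp [h])
  have hηint : ∀ i, Integrable (fun ω => η (Z i ω)) μ := fun i =>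
    integrable_condExp.congr (hcond i)
  have hmem : ∀ 𝓒 : Ω → Finset (Fin K), (∀ s, MeasurableSet[mZ] (𝓒 ⁻¹' {s})) →
      ∀ i, MeasurableSet[mZ] {ω | i ∈ 𝓒 ω} :=
    fun 𝓒 h𝓒 i => measurableSet_preimage_of_countable h𝓒 {s | i ∈ s}
  set 𝓑' : Ω → Finset (Fin K) := fun ω => topIndices B fun i => η (Z i ω)
  have h𝓑' : ∀ s, MeasurableSet[mZ] (𝓑' ⁻¹' {s}) := by
    have hrank : Measurable[mZ] fun ω => rankComparisons fun i => η (Z i ω) := by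
      subst hmZ
      exact measurable_rankComparisons.comp
        ((measurable_pi_lambda _ fun i => hη.comp (measurable_pi_apply i)).comp
          (comap_measurable _))
    exact fun s => hrank (Set.to_countable (topIndicesBy B ⁻¹' {s})).measurableSet
  refine ⟨?_, 𝓑', fun ω => card_topIndicesBy hB _, h𝓑', ?_⟩
  · rw [integral_sum_mem_eq_of_condExp_ae_eq hle hTint hcond (hmem 𝓑 hpol)]
    refine integral_mono (integrable_sum_mem hηint fun i => hle _ (hmem 𝓑 hpol i)) ?_
      fun ω => ?_
    · simp_rw [← sum_topIndices]
      exact integrable_sum_mem hηint fun i => hle _ (hmem 𝓑' h𝓑' i)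
    · simpa [hcard ω] using sum_le_topSum (fun i => η (Z i ω)) (𝓑 ω)
  · rw [integral_sum_mem_eq_of_condExp_ae_eq hle hTint hcond (hmem 𝓑' h𝓑')]
    simp_rw [𝓑', sum_topIndices]

/-- in the benchmark haystack model, any verification policy `𝓑`
selecting a size-`B` index set as a function of the screening statistics satisfies
`E[Σ_{i∈𝓑} Tᵢ] ≤ E[Σ_{ℓ≤B} η₍ℓ₎]`, where `ηᵢ = P(Tᵢ=1 | Zᵢ) = η(Zᵢ)`;
equality holds for the top-`B` policy. -/
theorem optimal_hit_rate
    {Ω : Type*} [m0 : MeasurableSpace Ω] (μ : Measure Ω) [IsProbabilityMeasure μ]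
    (K B : ℕ) (hB : B ≤ K)
    (T Z : Fin K → Ω → ℝ)
    (hTmeas : ∀ i, Measurable (T i)) (hZmeas : ∀ i, Measurable (Z i))
    (hT01 : ∀ i ω, T i ω = 0 ∨ T i ω = 1)
    (η : ℝ → ℝ) (hη : Measurable η)
    -- the σ-algebra generated by the screening statistics Z₁,…,Z_K
    (mZ : MeasurableSpace Ω)
    (hmZ : mZ = MeasurableSpace.comap (fun ω (i : Fin K) => Z i ω) inferInstance)
    (hle : mZ ≤ m0)
    -- conditional independence of the types given Z^K with E[Tᵢ | Z^K] = η(Zᵢ)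
    (hcond : ∀ i, μ[T i | mZ] =ᵐ[μ] fun ω => η (Z i ω))
    -- the verification policy: a size-B subset chosen measurably from Z^K
    (𝓑 : Ω → Finset (Fin K))
    (hcard : ∀ ω, (𝓑 ω).card = B)
    (hpol : ∀ s : Finset (Fin K), MeasurableSet[mZ] (𝓑 ⁻¹' {s})) :
    (∫ ω, ∑ i ∈ 𝓑 ω, T i ω ∂μ) ≤
      (∫ ω, topSum B (List.ofFn fun i : Fin K => η (Z i ω)) ∂μ) ∧
    ∃ 𝓑' : Ω → Finset (Fin K),
      (∀ ω, (𝓑' ω).card = B) ∧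
      (∀ s : Finset (Fin K), MeasurableSet[mZ] (𝓑' ⁻¹' {s})) ∧
      (∫ ω, ∑ i ∈ 𝓑' ω, T i ω ∂μ) =
        (∫ ω, topSum B (List.ofFn fun i : Fin K => η (Z i ω)) ∂μ) :=
  optimal_hit_rate_general (m0 := m0) μ K B hB T Z hTmeas hT01 η hη mZ hmZ hle hcond 𝓑 hcard hpol
end

section
/- Let η₁, η₂, … be i.i.d. samples of a random variable η with continuous distribution and values in [0,1], and let Q be its quantile function. Fix α ∈ (0,1), set B = ⌊αK⌋, and let η₍₁₎ ≥ … ≥ η₍K₎ be the order statistics. Then (1/K)·Σ_{ℓ=1}^{B} η₍ℓ₎ → ∫_{1−α}^{1} Q(u) du almost surely (hence in probability) as K → ∞. -/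
open MeasureTheory ProbabilityTheory Filter

/-!
Both sides are optimal values of Rockafellar–Uryasev problems. For `B ≤ l.length` the sum of the
`B` largest entries of `l` is `min_t (B t + ∑_{x ∈ l} (x - t)⁺)`, attained at the `B`-th largest
entry; dually `∫_{1-α}^1 Q = min_t (α t + E (η - t)⁺)`, attained at `t = Q (1 - α)`, as one sees
by pushing Lebesgue measure on `(0, 1)` forward along `Q` to the law of `η`. By the strong law of
large numbers the normalized empirical objectives converge almost surely to the population one at
every rational `t` and at `Q (1 - α)`; as they are all `2`-Lipschitz in `t` and the empirical
minimizers lie in `[0, 1]`, the minima converge too.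
-/

open Set Metric
open scoped NNReal Topology

lemma List.sum_eq_length_mul_add_sum_sub (l : List ℝ) (t : ℝ) :
    l.sum = l.length * t + (l.map fun x => x - t).sum := by
  induction l with
  | nil => simp
  | cons a l ih => simp only [List.sum_cons, ih, List.length_cons, List.map_cons]; push_cast; ring

lemma List.sum_map_eq_take_add_drop {α : Type*} (l : List α) (f : α → ℝ) (B : ℕ) :
    (l.map f).sum = ((l.take B).map f).sum + ((l.drop B).map f).sum := by
  rw [← List.sum_append, ← List.map_append, List.take_append_drop]

lemma topSum_le_mul_add_sum_posPart {B : ℕ} {l : List ℝ} (hB : B ≤ l.length) (t : ℝ) :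
    topSum B l ≤ B * t + (l.map fun x => (x - t)⁺).sum := by
  set s := l.insertionSort (· ≥ ·)
  have hs : s.length = l.length := (l.perm_insertionSort _).length_eq
  have htake : (s.take B).length = B := by rw [List.length_take]; omega
  rw [← ((l.perm_insertionSort (· ≥ ·)).map _).sum_eq, List.sum_map_eq_take_add_drop _ _ B,
    topSum, List.sum_eq_length_mul_add_sum_sub _ t, htake]
  gcongr
  calc ((s.take B).map fun x => x - t).sum ≤ ((s.take B).map fun x => (x - t)⁺).sum :=
        List.sum_le_sum fun x _ => le_posPart _
    _ ≤ _ := le_add_of_nonneg_right <| List.sum_nonneg fun y hy => by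
      obtain ⟨x, -, rfl⟩ := List.mem_map.1 hy
      exact posPart_nonneg _

lemma exists_mem_mul_add_sum_posPart_eq_topSum {B : ℕ} {l : List ℝ} (hB0 : 0 < B)
    (hB : B ≤ l.length) : ∃ t ∈ l, B * t + (l.map fun x => (x - t)⁺).sum = topSum B l := by
  set s := l.insertionSort (· ≥ ·)
  have hperm : s.Perm l := l.perm_insertionSort _
  have hsorted : s.Pairwise (· ≥ ·) := l.pairwise_insertionSort _
  have hB1 : B - 1 < s.length := by rw [hperm.length_eq]; omega
  have htake_len : (s.take B).length = B := by rw [List.length_take]; omega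
  have hmem : s[B - 1] ∈ s.take B := List.mem_take_iff_getElem.2 ⟨B - 1, by omega, rfl⟩
  refine ⟨s[B - 1], hperm.mem_iff.1 (List.getElem_mem hB1), ?_⟩
  set t := s[B - 1]
  have hge : ∀ x ∈ s.take B, t ≤ x := by
    intro x hx
    obtain ⟨i, hi, rfl⟩ := List.mem_take_iff_getElem.1 hx
    rcases (show i ≤ B - 1 by omega).eq_or_lt with h | h
    · simp [t, h]
    · exact hsorted.rel_get_of_lt (a := ⟨i, by omega⟩) (b := ⟨B - 1, hB1⟩) h
  have hle : ∀ x ∈ s.drop B, x ≤ t := fun x hx => hsorted.rel_of_mem_take_of_mem_drop hmem hx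
  have hdrop : ((s.drop B).map fun x => (x - t)⁺).sum = 0 :=
    List.sum_eq_zero fun y hy => by
      obtain ⟨x, hx, rfl⟩ := List.mem_map.1 hy
      exact posPart_eq_zero.2 (sub_nonpos.2 (hle x hx))
  have htake : ((s.take B).map fun x => (x - t)⁺).sum = ((s.take B).map fun x => x - t).sum :=
    congrArg List.sum (List.map_congr_left fun x hx => posPart_eq_self.2 (sub_nonneg.2 (hge x hx)))
  rw [← (hperm.map _).sum_eq, List.sum_map_eq_take_add_drop _ _ B, hdrop, add_zero, htake,
    topSum, List.sum_eq_length_mul_add_sum_sub (s.take B) t, htake_len]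

lemma tendsto_of_lipschitzWith_of_tendsto_dense {ι X : Type*} [PseudoMetricSpace X]
    {l : Filter ι} {f : ι → X → ℝ} {g : X → ℝ} {a : ι → ℝ} {S D : Set X} {C : ℝ≥0} {L : ℝ}
    {x₀ : X} (hS : IsCompact S) (hD : Dense D) (hf : ∀ n, LipschitzWith C (f n))
    (hfD : ∀ x ∈ D, Tendsto (f · x) l (𝓝 (g x))) (hgD : ∀ x ∈ D, L ≤ g x)
    (hfx₀ : Tendsto (f · x₀) l (𝓝 L)) (ha_le : ∀ᶠ n in l, a n ≤ f n x₀)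
    (hle_a : ∀ᶠ n in l, ∃ x ∈ S, f n x ≤ a n) :
    Tendsto a l (𝓝 L) := by
  refine tendsto_order.2 ⟨fun b hb => ?_, fun b hb => ?_⟩
  · obtain ⟨δ, hδ, hbδ⟩ : ∃ δ > 0, b < L - (C + 1) * δ :=
      ⟨(L - b) / (2 * (C + 1)), by positivity, by field_simp; linarith⟩
    obtain ⟨F, hFD, hF, hSF⟩ := hS.elim_finite_subcover_image (b := D) (c := (ball · δ))
      (fun _ _ => isOpen_ball) fun x _ =>
        let ⟨y, hyD, hxy⟩ := hD.exists_dist_lt x hδ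
        mem_iUnion₂.2 ⟨y, hyD, hxy⟩
    have hnet : ∀ᶠ n in l, ∀ y ∈ F, L - δ < f n y :=
      (eventually_all_finite hF).2 fun y hy =>
        (hfD y (hFD hy)).eventually (lt_mem_nhds (by linarith [hgD y (hFD hy)]))
    filter_upwards [hnet, hle_a] with n hn ⟨x, hxS, hxa⟩
    obtain ⟨y, hyF, hxy⟩ := mem_iUnion₂.1 (hSF hxS)
    have hlip : |f n y - f n x| ≤ C * δ := by
      rw [← Real.dist_eq]
      exact ((hf n).dist_le_mul y x).trans
        (mul_le_mul_of_nonneg_left (by rw [dist_comm]; exact (mem_ball.1 hxy).le) C.2)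
    linarith [hn y hyF, (abs_le.1 hlip).2, show (C + 1 : ℝ) * δ = C * δ + δ by ring]
  · filter_upwards [hfx₀.eventually (gt_mem_nhds hb), ha_le] with n h1 h2
    exact h2.trans_lt h1

/-- The quantile function of `ν`; its values outside `(0, 1)` are junk. -/
noncomputable def quantile (ν : Measure ℝ) (u : ℝ) : ℝ :=
  sInf {x | u ≤ cdf ν x}

section Quantile

variable {ν : Measure ℝ} {u : ℝ}

lemma bddBelow_setOf_le_cdf (hu : 0 < u) : BddBelow {x | u ≤ cdf ν x} := by
  obtain ⟨x₀, hx₀⟩ := eventually_atBot.1 ((tendsto_cdf_atBot (μ := ν)).eventually (gt_mem_nhds hu))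
  exact ⟨x₀, fun x hx => le_of_not_gt fun hlt => (hx.trans_lt (hx₀ x hlt.le)).false⟩

lemma nonempty_setOf_le_cdf (hu : u < 1) : {x | u ≤ cdf ν x}.Nonempty :=
  ((tendsto_cdf_atTop (μ := ν)).eventually (lt_mem_nhds hu)).exists.imp fun _ => le_of_lt

lemma quantile_le_iff (hu : u ∈ Ioo 0 1) (x : ℝ) : quantile ν u ≤ x ↔ u ≤ cdf ν x := by
  refine ⟨fun h => ?_, fun h => csInf_le (bddBelow_setOf_le_cdf hu.1) h⟩
  have hright : ∀ y > quantile ν u, u ≤ cdf ν y := fun y hy =>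
    let ⟨z, hz, hzy⟩ := exists_lt_of_csInf_lt (nonempty_setOf_le_cdf hu.2) hy
    hz.trans ((cdf ν).mono hzy.le)
  have hcdf : u ≤ cdf ν (quantile ν u) :=
    ge_of_tendsto (((cdf ν).right_continuous _).tendsto.mono_left
      (nhdsWithin_mono _ Ioi_subset_Ici_self))
      (eventually_nhdsWithin_of_forall hright)
  exact hcdf.trans ((cdf ν).mono h)

lemma monotoneOn_quantile : MonotoneOn (quantile ν) (Ioo 0 1) := fun _ hu _ hv huv =>
  (quantile_le_iff hu _).2 (huv.trans ((quantile_le_iff hv _).1 le_rfl))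

lemma aemeasurable_quantile : AEMeasurable (quantile ν) (volume.restrict (Ioo 0 1)) :=
  aemeasurable_restrict_of_monotoneOn measurableSet_Ioo monotoneOn_quantile

variable [IsProbabilityMeasure ν]

lemma map_quantile_volume : (volume.restrict (Ioo 0 1)).map (quantile ν) = ν := by
  refine (Measure.ext_of_Iic _ _ fun x => ?_).symm
  have hset : Ioo 0 1 ∩ quantile ν ⁻¹' Iic x = Ioo 0 1 ∩ Iic (cdf ν x) := by
    ext u
    simp only [mem_inter_iff, mem_preimage, mem_Iic, and_congr_right_iff]
    exact fun hu => quantile_le_iff hu x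
  have hae : (Ioo 0 1 ∩ Iic (cdf ν x) : Set ℝ) =ᵐ[volume] (Ioc 0 1 ∩ Iic (cdf ν x) : Set ℝ) :=
    Ioo_ae_eq_Ioc.inter (EventuallyEq.refl _ (Iic (cdf ν x)))
  rw [Measure.map_apply_of_aemeasurable aemeasurable_quantile measurableSet_Iic,
    Measure.restrict_apply' measurableSet_Ioo, inter_comm, hset,
    measure_congr hae, Ioc_inter_Iic,
    min_eq_right (cdf_le_one ν x), Real.volume_Ioc, sub_zero, cdf_eq_real,
    ofReal_measureReal]

lemma integral_comp_quantile {f : ℝ → ℝ} (hf : AEStronglyMeasurable f ν) :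
    ∫ u in Ioo 0 1, f (quantile ν u) = ∫ y, f y ∂ν := by
  have hmap := map_quantile_volume (ν := ν)
  rw [← integral_map aemeasurable_quantile (hmap.symm ▸ hf), hmap]

lemma integrableOn_comp_quantile {f : ℝ → ℝ} (hf : Integrable f ν) :
    IntegrableOn (fun u => f (quantile ν u)) (Ioo 0 1) := by
  rw [← map_quantile_volume (ν := ν)] at hf
  exact (integrable_map_measure hf.1 aemeasurable_quantile).1 hf

lemma setIntegral_quantile_le (hν : Integrable id ν) {α : ℝ} (hα0 : 0 ≤ α) (hα1 : α ≤ 1) (t : ℝ) :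
    ∫ u in Ioo (1 - α) 1, quantile ν u ≤ α * t + ∫ y, (y - t)⁺ ∂ν := by
  have hsub : Ioo (1 - α) 1 ⊆ Ioo 0 1 := Ioo_subset_Ioo_left (by linarith)
  have hQ : IntegrableOn (quantile ν) (Ioo 0 1) := integrableOn_comp_quantile hν
  have hpos : IntegrableOn (fun u => (quantile ν u - t)⁺) (Ioo 0 1) :=
    integrableOn_comp_quantile (hν.sub (integrable_const t)).pos_part
  calc ∫ u in Ioo (1 - α) 1, quantile ν u
      ≤ ∫ u in Ioo (1 - α) 1, (t + (quantile ν u - t)⁺) :=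
        setIntegral_mono_on (hQ.mono_set hsub) ((integrable_const t).add (hpos.mono_set hsub))
          measurableSet_Ioo fun u _ => by linarith [le_posPart (quantile ν u - t)]
    _ = α * t + ∫ u in Ioo (1 - α) 1, (quantile ν u - t)⁺ := by
        rw [integral_add (integrable_const t) (hpos.mono_set hsub), setIntegral_const,
          Real.volume_real_Ioo_of_le (by linarith), smul_eq_mul, sub_sub_cancel]
    _ ≤ α * t + ∫ u in Ioo 0 1, (quantile ν u - t)⁺ := add_le_add le_rfl <|
        setIntegral_mono_set hpos (ae_of_all _ fun _ => posPart_nonneg _) hsub.eventuallyLE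
    _ = α * t + ∫ y, (y - t)⁺ ∂ν := by
        rw [integral_comp_quantile (f := fun y => (y - t)⁺) (by fun_prop)]

lemma mul_add_integral_posPart_sub_quantile (hν : Integrable id ν) {α : ℝ} (hα : α ∈ Ioo 0 1) :
    α * quantile ν (1 - α) + ∫ y, (y - quantile ν (1 - α))⁺ ∂ν
      = ∫ u in Ioo (1 - α) 1, quantile ν u := by
  set t := quantile ν (1 - α)
  have h1α : 1 - α ∈ Ioo (0 : ℝ) 1 := ⟨by linarith [hα.2], by linarith [hα.1]⟩
  have hQ : IntegrableOn (quantile ν) (Ioo (1 - α) 1) :=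
    (integrableOn_comp_quantile hν).mono_set (Ioo_subset_Ioo_left h1α.1.le)
  -- by monotonicity, `quantile ν ≤ t` on `(0, 1 - α]` and `t ≤ quantile ν` on `(1 - α, 1)`
  have hposPart : EqOn (fun u => (quantile ν u - t)⁺)
      ((Ioo (1 - α) 1).indicator fun u => quantile ν u - t) (Ioo 0 1) := by
    intro u hu
    by_cases h : u ∈ Ioo (1 - α) 1
    · rw [indicator_of_mem h, posPart_eq_self, sub_nonneg]
      exact monotoneOn_quantile h1α hu h.1.le
    · rw [indicator_of_notMem h, posPart_eq_zero, sub_nonpos]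
      exact monotoneOn_quantile hu h1α (not_lt.1 fun h' => h ⟨h', hu.2⟩)
  rw [← integral_comp_quantile (f := fun y => (y - t)⁺) (by fun_prop),
    setIntegral_congr_fun measurableSet_Ioo hposPart,
    setIntegral_indicator measurableSet_Ioo, inter_eq_right.2 (Ioo_subset_Ioo_left h1α.1.le),
    integral_sub hQ (integrable_const t), setIntegral_const,
    Real.volume_real_Ioo_of_le (by linarith [hα.1]), smul_eq_mul, sub_sub_cancel]
  ring

end Quantile

/-- The empirical Rockafellar–Uryasev objective, whose minimum over `t` is the normalized sum of
the `⌊α K⌋` largest of `x 0, …, x (K - 1)`. -/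
noncomputable def cvarObjective (α : ℝ) (x : ℕ → ℝ) (K : ℕ) (t : ℝ) : ℝ :=
  ⌊α * K⌋₊ / K * t + (∑ i ∈ Finset.range K, (x i - t)⁺) / K

section CVaRObjective

variable {α : ℝ}

lemma floor_mul_natCast_le (hα : α ≤ 1) (K : ℕ) : ⌊α * K⌋₊ ≤ K :=
  Nat.floor_le_of_le (mul_le_of_le_one_left K.cast_nonneg hα)

lemma lipschitzWith_cvarObjective (hα : α ≤ 1) (x : ℕ → ℝ) (K : ℕ) :
    LipschitzWith 2 (cvarObjective α x K) := by
  refine LipschitzWith.of_dist_le_mul fun s t => ?_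
  have hB : (⌊α * K⌋₊ : ℝ) / K ≤ 1 :=
    div_le_one_of_le₀ (by exact_mod_cast floor_mul_natCast_le hα K) K.cast_nonneg
  have hsum : |∑ i ∈ Finset.range K, (x i - s)⁺ - ∑ i ∈ Finset.range K, (x i - t)⁺|
      ≤ K * |s - t| :=
    calc _ ≤ ∑ i ∈ Finset.range K, |(x i - s)⁺ - (x i - t)⁺| := by
          rw [← Finset.sum_sub_distrib]; exact Finset.abs_sum_le_sum_abs _ _
      _ ≤ ∑ i ∈ Finset.range K, |s - t| := Finset.sum_le_sum fun i _ =>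
          (abs_max_sub_max_le_abs _ _ _).trans_eq (by rw [sub_sub_sub_cancel_left, abs_sub_comm])
      _ = K * |s - t| := by simp
  rw [Real.dist_eq, Real.dist_eq, cvarObjective, cvarObjective, NNReal.coe_ofNat]
  calc _ = |⌊α * K⌋₊ / K * (s - t) + (∑ i ∈ Finset.range K, (x i - s)⁺
          - ∑ i ∈ Finset.range K, (x i - t)⁺) / K| := by ring_nf
    _ ≤ ⌊α * K⌋₊ / K * |s - t| + |∑ i ∈ Finset.range K, (x i - s)⁺
          - ∑ i ∈ Finset.range K, (x i - t)⁺| / K := by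
        refine (abs_add_le _ _).trans_eq ?_
        rw [abs_mul, abs_of_nonneg (by positivity : (0 : ℝ) ≤ ⌊α * K⌋₊ / K), abs_div,
          Nat.abs_cast]
    _ ≤ 1 * |s - t| + |s - t| := by
        gcongr
        exact div_le_of_le_mul₀ K.cast_nonneg (abs_nonneg _) (by linarith [hsum])
    _ = 2 * |s - t| := by ring

lemma sum_map_ofFn_eq_sum_range (x : ℕ → ℝ) (f : ℝ → ℝ) (K : ℕ) :
    ((List.ofFn fun i : Fin K => x i).map f).sum = ∑ i ∈ Finset.range K, f (x i) := by
  simp [List.sum_ofFn, Fin.sum_univ_eq_sum_range (fun i => f (x i))]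

lemma one_div_mul_topSum_le_cvarObjective (hα : α ≤ 1) (x : ℕ → ℝ) (K : ℕ) (t : ℝ) :
    1 / K * topSum ⌊α * K⌋₊ (List.ofFn fun i : Fin K => x i) ≤ cvarObjective α x K t := by
  have h := topSum_le_mul_add_sum_posPart (l := List.ofFn fun i : Fin K => x i)
    (by simpa using floor_mul_natCast_le hα K) t
  rw [sum_map_ofFn_eq_sum_range] at h
  calc _ ≤ 1 / K * (⌊α * K⌋₊ * t + ∑ i ∈ Finset.range K, (x i - t)⁺) := by gcongr
    _ = cvarObjective α x K t := by rw [cvarObjective]; ring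

lemma exists_cvarObjective_eq_one_div_mul_topSum (hα : α ≤ 1) (x : ℕ → ℝ) {K : ℕ}
    (hB : 0 < ⌊α * K⌋₊) :
    ∃ i : Fin K, cvarObjective α x K (x i)
      = 1 / K * topSum ⌊α * K⌋₊ (List.ofFn fun i : Fin K => x i) := by
  obtain ⟨t, ht, h⟩ :=
    exists_mem_mul_add_sum_posPart_eq_topSum (l := List.ofFn fun i : Fin K => x i) hB
      (by simpa using floor_mul_natCast_le hα K)
  obtain ⟨i, rfl⟩ := List.mem_ofFn.1 ht
  refine ⟨i, ?_⟩
  rw [← h, sum_map_ofFn_eq_sum_range, cvarObjective]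
  ring

lemma ae_tendsto_cvarObjective {Ω : Type*} [MeasurableSpace Ω] {μ : Measure Ω}
    [IsFiniteMeasure μ] {η : ℕ → Ω → ℝ} (hint : Integrable (η 0) μ) (hindep : iIndepFun η μ)
    (hident : ∀ i, IdentDistrib (η i) (η 0) μ μ) (hα : 0 ≤ α) (t : ℝ) :
    ∀ᵐ ω ∂μ, Tendsto (fun K => cvarObjective α (η · ω) K t) atTop
      (𝓝 (α * t + ∫ y, (y - t)⁺ ∂μ.map (η 0))) := by
  have hφ : Measurable fun y : ℝ => (y - t)⁺ := by fun_prop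
  have hfloor : Tendsto (fun K : ℕ => (⌊α * K⌋₊ : ℝ) / K) atTop (𝓝 α) :=
    (tendsto_nat_floor_mul_div_atTop hα).comp tendsto_natCast_atTop_atTop
  have hslln := strong_law_ae_real (fun i ω => (η i ω - t)⁺)
    (hint.sub (integrable_const t)).pos_part
    (fun i j hij => (hindep.comp (fun _ => _) fun _ => hφ).indepFun hij)
    (fun i => (hident i).comp hφ)
  rw [integral_map hint.aemeasurable hφ.aestronglyMeasurable]
  filter_upwards [hslln] with ω hω
  exact (hfloor.mul_const t).add hω

end CVaRObjective

theorem top_sum_quantile_limit_general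
    {Ω : Type*} [MeasurableSpace Ω] (μ : Measure Ω) [IsProbabilityMeasure μ]
    (η : ℕ → Ω → ℝ) (hmeas : ∀ i, Measurable (η i))
    (hindep : iIndepFun η μ)
    (hident : ∀ i, IdentDistrib (η i) (η 0) μ μ)
    (hrange : ∀ i ω, η i ω ∈ Set.Icc (0 : ℝ) 1)
    (Q : ℝ → ℝ) (hQ : Q = fun u => sInf {x : ℝ | u ≤ (μ {ω | η 0 ω ≤ x}).toReal})
    (α : ℝ) (hα0 : 0 < α) (hα1 : α < 1) :
    ∀ᵐ ω ∂μ, Tendsto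
      (fun (K : ℕ) => (1 / (K : ℝ)) *
        topSum (Nat.floor (α * (K : ℝ))) (List.ofFn fun i : Fin K => η i ω))
      atTop (nhds (∫ u in Set.Ioo (1 - α) 1, Q u)) := by
  set ν := μ.map (η 0)
  have : IsProbabilityMeasure ν := Measure.isProbabilityMeasure_map (hmeas 0).aemeasurable
  have hQν : Q = quantile ν := by
    ext u
    simp only [hQ, quantile, cdf_eq_real, measureReal_def, ν,
      Measure.map_apply (hmeas 0) measurableSet_Iic]
    rfl
  have hint : Integrable (η 0) μ := .of_bound (hmeas 0).aestronglyMeasurable 1 <|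
    ae_of_all _ fun ω => by simpa [abs_le] using Icc_subset_Icc_left (by norm_num) (hrange 0 ω)
  have hνint : Integrable id ν :=
    (integrable_map_measure aestronglyMeasurable_id (hmeas 0).aemeasurable).2 hint
  have hcvar := mul_add_integral_posPart_sub_quantile hνint ⟨hα0, hα1⟩
  have hlim := ae_tendsto_cvarObjective hint hindep hident hα0.le
  have hB : ∀ᶠ K : ℕ in atTop, 0 < ⌊α * K⌋₊ :=
    ((tendsto_natCast_atTop_atTop.const_mul_atTop hα0).eventually_ge_atTop 1).mono
      fun K hK => Nat.floor_pos.2 hK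
  filter_upwards [ae_all_iff.2 fun q : ℚ => hlim q, hlim (quantile ν (1 - α))] with ω hD ht₀
  rw [hQν, ← hcvar]
  refine tendsto_of_lipschitzWith_of_tendsto_dense (S := Icc 0 1)
    (g := fun t => α * t + ∫ y, (y - t)⁺ ∂ν) isCompact_Icc Rat.denseRange_cast
    (fun K => lipschitzWith_cvarObjective hα1.le _ K) ?_ ?_ ht₀
    (.of_forall fun K => one_div_mul_topSum_le_cvarObjective hα1.le (η · ω) K _) ?_
  · rintro _ ⟨q, rfl⟩
    exact hD q
  · rintro _ ⟨q, rfl⟩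
    rw [hcvar]
    exact setIntegral_quantile_le hνint hα0.le hα1.le q
  · filter_upwards [hB] with K hK
    obtain ⟨i, hi⟩ := exists_cvarObjective_eq_one_div_mul_topSum hα1.le (η · ω) hK
    exact ⟨η i ω, hrange i ω, hi.le⟩

/-- for i.i.d. `η₁,η₂,…` with values in `[0,1]` and continuous
distribution, with `B = ⌊αK⌋`, the normalized top-`B` sum `(1/K)Σ_{ℓ≤B} η₍ℓ₎`
converges almost surely (hence in probability) to `∫_{1−α}^1 Q(u) du`, where `Q`
is the quantile function. -/
theorem top_sum_quantile_limit
    {Ω : Type*} [MeasurableSpace Ω] (μ : Measure Ω) [IsProbabilityMeasure μ]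
    (η : ℕ → Ω → ℝ) (hmeas : ∀ i, Measurable (η i))
    (hindep : iIndepFun η μ)
    (hident : ∀ i, IdentDistrib (η i) (η 0) μ μ)
    (hrange : ∀ i ω, η i ω ∈ Set.Icc (0 : ℝ) 1)
    (hcont : ∀ x : ℝ, μ {ω | η 0 ω = x} = 0)
    (Q : ℝ → ℝ) (hQ : Q = fun u => sInf {x : ℝ | u ≤ (μ {ω | η 0 ω ≤ x}).toReal})
    (α : ℝ) (hα0 : 0 < α) (hα1 : α < 1) :
    ∀ᵐ ω ∂μ, Tendsto
      (fun (K : ℕ) => (1 / (K : ℝ)) *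
        topSum (Nat.floor (α * (K : ℝ))) (List.ofFn fun i : Fin K => η i ω))
      atTop (nhds (∫ u in Set.Ioo (1 - α) 1, Q u)) :=
  top_sum_quantile_limit_general μ η hmeas hindep hident hrange Q hQ α hα0 hα1
end
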